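/- arXiv:1311.0928 — 3 statements merged into one kernel-verified Lean document; each statement's English description precedes it below -/
import Mathlib

section
/- The set of all covectors of a finite arrangement of closed half-spaces through the origin in ℝ³ satisfies axiom (CV2): it is closed under composition. That is, if X and Y are sign vectors arising as (sign(⟨v, n_e⟩))_{e∈E} for points v, w on the unit sphere, then X ∘ Y also arises from some point on the unit sphere. -/
/-!
If `v` realizes `X` and `w` realizes `Y`, then for all sufficiently small `ε > 0` the point
`v + ε • w` realizes `X ∘ Y`: where `⟨v, n e⟩ ≠ 0` the small perturbation does not change its sign,
and where `⟨v, n e⟩ = 0` the sign is that of `ε ⟨w, n e⟩`. Since `E` is finite, one `ε` works for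
all `e`; as `v ≠ 0`, also `v + ε • w ≠ 0`, and normalizing to the unit sphere keeps all signs.
-/

open Filter Topology

/-- Composition of sign vectors: `(X ∘ Y)_e = X_e` if `X_e ≠ 0`, else `Y_e`. -/
noncomputable def svComp {E : Type*} (X Y : E → ℝ) : E → ℝ :=
  fun e => if X e ≠ 0 then X e else Y e

/-- The covector of a point `v` w.r.t. a family of oriented central planes with
normals `n e`. -/
noncomputable def covec {E : Type*} (n : E → EuclideanSpace ℝ (Fin 3))
    (v : EuclideanSpace ℝ (Fin 3)) : E → ℝ :=
  fun e => Real.sign (inner ℝ v (n e))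

namespace Real

theorem sign_mul_of_pos {c : ℝ} (hc : 0 < c) (x : ℝ) : sign (c * x) = sign x := by
  rcases lt_trichotomy x 0 with hx | rfl | hx
  · rw [sign_of_neg hx, sign_of_neg (mul_neg_of_pos_of_neg hc hx)]
  · rw [mul_zero]
  · rw [sign_of_pos hx, sign_of_pos (mul_pos hc hx)]

theorem eventually_sign_eq {a : ℝ} (ha : a ≠ 0) : ∀ᶠ x in 𝓝 a, sign x = sign a := by
  rcases ha.lt_or_gt with ha | ha
  · filter_upwards [eventually_lt_nhds ha] with x hx
    rw [sign_of_neg hx, sign_of_neg ha]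
  · filter_upwards [eventually_gt_nhds ha] with x hx
    rw [sign_of_pos hx, sign_of_pos ha]

theorem eventually_sign_add_mul (a b : ℝ) :
    ∀ᶠ ε in 𝓝[>] 0, sign (a + ε * b) = if sign a ≠ 0 then sign a else sign b := by
  by_cases ha : a = 0
  · filter_upwards [self_mem_nhdsWithin] with ε (hε : 0 < ε)
    simp only [ha, sign_zero, zero_add, ne_eq, not_true_eq_false, if_false, sign_mul_of_pos hε]
  · have hlim : Tendsto (fun ε : ℝ => a + ε * b) (𝓝[>] 0) (𝓝 a) :=
      ((continuous_const.add (continuous_id.mul continuous_const)).tendsto' 0 a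
        (by simp)).mono_left nhdsWithin_le_nhds
    filter_upwards [hlim.eventually (eventually_sign_eq ha)] with ε hε
    rw [hε, if_pos (mt sign_eq_zero_iff.mp ha)]

end Real

theorem covec_smul_of_pos {E : Type*} (n : E → EuclideanSpace ℝ (Fin 3))
    {c : ℝ} (hc : 0 < c) (v : EuclideanSpace ℝ (Fin 3)) : covec n (c • v) = covec n v := by
  funext e
  simp only [covec, real_inner_smul_left, Real.sign_mul_of_pos hc]

theorem eventually_covec_add_smul {E : Type*} [Finite E] (n : E → EuclideanSpace ℝ (Fin 3))
    (v w : EuclideanSpace ℝ (Fin 3)) :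
    ∀ᶠ ε in 𝓝[>] (0 : ℝ), covec n (v + ε • w) = svComp (covec n v) (covec n w) := by
  have h := eventually_all.mpr fun e =>
    Real.eventually_sign_add_mul (inner ℝ v (n e)) (inner ℝ w (n e))
  filter_upwards [h] with ε hε
  funext e
  rw [covec, inner_add_left, real_inner_smul_left, hε e]
  rfl

theorem covector_composition_realizable_general {E : Type*} [Fintype E]
    (n : E → EuclideanSpace ℝ (Fin 3))
    (v w : EuclideanSpace ℝ (Fin 3)) (hv : ‖v‖ = 1) :
    ∃ z : EuclideanSpace ℝ (Fin 3), ‖z‖ = 1 ∧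
      covec n z = svComp (covec n v) (covec n w) := by
  have hv0 : v ≠ 0 := norm_ne_zero_iff.mp (by rw [hv]; exact one_ne_zero)
  have hlim : Tendsto (fun ε : ℝ => v + ε • w) (𝓝[>] 0) (𝓝 v) :=
    ((continuous_const.add (continuous_id.smul continuous_const)).tendsto' 0 v
      (by simp)).mono_left nhdsWithin_le_nhds
  obtain ⟨ε, hcovec, hne⟩ :=
    (eventually_covec_add_smul n v w |>.and (hlim.eventually_ne hv0)).exists
  refine ⟨‖v + ε • w‖⁻¹ • (v + ε • w), norm_smul_inv_norm hne, ?_⟩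
  rw [covec_smul_of_pos n (inv_pos.mpr (norm_pos_iff.mpr hne)), hcovec]

/-- (CV2) for realizable covectors: the composition of the covectors of two
points of the unit sphere is again the covector of a point of the unit sphere. -/
theorem covector_composition_realizable {E : Type*} [Fintype E]
    (n : E → EuclideanSpace ℝ (Fin 3)) (hn : ∀ e, n e ≠ 0)
    (v w : EuclideanSpace ℝ (Fin 3)) (hv : ‖v‖ = 1) (hw : ‖w‖ = 1) :
    ∃ z : EuclideanSpace ℝ (Fin 3), ‖z‖ = 1 ∧
      covec n z = svComp (covec n v) (covec n w) :=
  covector_composition_realizable_general n v w hv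
end

section
/- For a finite point set P in ℝ^d and a point q that is extreme in P (i.e., q is not in the convex hull of P \ {q}), the map ∇_q(p_0, ..., p_{d-1}) := ∇(p_0, ..., p_{d-1}, q), restricted to radial projections, determines the orientations of all (d+1)-tuples of P containing q; in particular, for d = 2 and p an extreme point of P, sorting P \ {p} by counterclockwise angular order around p is well-defined: for any three distinct points a, b, c of P \ {p}, the orientations ∇(p, a, b), ∇(p, b, c), ∇(p, a, c) cannot be such that ∇(p,a,b) = ∇(p,b,c) = + while ∇(p,a,c) = -. -/
/-- Orientation determinant of three planar points. -/
noncomputable def det3 (a b c : Fin 2 → ℝ) : ℝ :=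
  Matrix.det !![a 0, a 1, 1; b 0, b 1, 1; c 0, c 1, 1]

lemma det3_eq (a b c : Fin 2 → ℝ) :
    det3 a b c = a 0 * b 1 + b 0 * c 1 + c 0 * a 1
      - a 1 * b 0 - b 1 * c 0 - c 1 * a 0 := by
  simp [det3, Matrix.det_fin_three, Matrix.vecHead, Matrix.vecTail]
  ring

/-- Radial sorting around an extreme point is well-defined: around an extreme
point `p` of a finite planar set, the counterclockwise relation is transitive;
the sign pattern `∇(p,a,b) = ∇(p,b,c) = +` with `∇(p,a,c) = -` is impossible. -/
theorem ccw_transitive_around_extreme (P : Finset (Fin 2 → ℝ))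
    (p : Fin 2 → ℝ) (hp : p ∈ P)
    (hext : p ∉ convexHull ℝ ((P : Set (Fin 2 → ℝ)) \ {p}))
    (a b c : Fin 2 → ℝ)
    (ha : a ∈ P) (hb : b ∈ P) (hc : c ∈ P)
    (hap : a ≠ p) (hbp : b ≠ p) (hcp : c ≠ p)
    (hab : a ≠ b) (hbc : b ≠ c) (hac : a ≠ c)
    (h1 : 0 < det3 p a b) (h2 : 0 < det3 p b c) :
    ¬ det3 p a c < 0 := by
  intro h3
  apply hext
  set α := det3 p b c with hα
  set β := det3 p c a with hβ
  set γ := det3 p a b with hγ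
  have hβpos : 0 < β := by
    have : det3 p c a = -det3 p a c := by rw [det3_eq, det3_eq]; ring
    rw [hβ, this]; linarith
  have hs : 0 < α + β + γ := by linarith
  have key : (Finset.univ : Finset (Fin 3)).centerMass ![α, β, γ] ![a, b, c] = p := by
    rw [Finset.centerMass, Fin.sum_univ_three, Fin.sum_univ_three]
    show (α + β + γ)⁻¹ • (α • a + β • b + γ • c) = p
    rw [inv_smul_eq_iff₀ (by positivity)]
    funext i
    have hi : i = 0 ∨ i = 1 := by omega
    rcases hi with h | h <;> subst h <;>
    · show α * a _ + β * b _ + γ * c _ = (α + β + γ) * p _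
      rw [hα, hβ, hγ, det3_eq, det3_eq, det3_eq]
      ring
  rw [← key]
  refine Finset.centerMass_mem_convexHull _ ?_ ?_ ?_
  · intro i _
    fin_cases i
    · exact le_of_lt h2
    · exact le_of_lt hβpos
    · exact le_of_lt h1
  · rw [Fin.sum_univ_three]; exact hs
  · intro i _
    fin_cases i
    · refine ⟨ha, fun h => hap (h.trans key)⟩
    · refine ⟨hb, fun h => hbp (h.trans key)⟩
    · refine ⟨hc, fun h => hcp (h.trans key)⟩
end

section
/- Let p be an extreme point of a finite planar point set P in general position (no three collinear), with all other points strictly to the left of some directed line through p. Then the relation a ≺ b defined by ∇(p, a, b) > 0 is a strict total order on P \ {p}. -/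
open Matrix

/-- Around an extreme point `p` of a planar point set in general position, with
all other points strictly on one side of a line through `p`, the relation
`a ≺ b ↔ ∇(p,a,b) > 0` is a strict total order on `P \ {p}`. -/
theorem ccw_strict_total_order (P : Finset (Fin 2 → ℝ)) (p : Fin 2 → ℝ) (hp : p ∈ P)
    (hgp : ∀ x ∈ P, ∀ y ∈ P, ∀ z ∈ P, x ≠ y → y ≠ z → x ≠ z → det3 x y z ≠ 0)
    (hext : ∃ (u : Fin 2 → ℝ) (c : ℝ), u ⬝ᵥ p = c ∧
      ∀ q ∈ P, q ≠ p → u ⬝ᵥ q < c) :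
    (∀ a ∈ P, a ≠ p → ¬ 0 < det3 p a a) ∧
    (∀ a ∈ P, a ≠ p → ∀ b ∈ P, b ≠ p → ∀ c ∈ P, c ≠ p →
        0 < det3 p a b → 0 < det3 p b c → 0 < det3 p a c) ∧
    (∀ a ∈ P, a ≠ p → ∀ b ∈ P, b ≠ p → a ≠ b →
        0 < det3 p a b ∨ 0 < det3 p b a) := by
  obtain ⟨u, c0, hu, hlt⟩ := hext
  subst hu
  refine ⟨?_, ?_, ?_⟩
  · intro a _ _ h
    have : det3 p a a = 0 := by
      simp [det3, Matrix.det_fin_three, Matrix.vecHead, Matrix.vecTail]; ring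
    linarith
  · intro a ha hap b hb hbp c hc hcp hab hbc
    have La : u ⬝ᵥ p - u ⬝ᵥ a > 0 := by have := hlt a ha hap; linarith
    have Lb : u ⬝ᵥ p - u ⬝ᵥ b > 0 := by have := hlt b hb hbp; linarith
    have Lc : u ⬝ᵥ p - u ⬝ᵥ c > 0 := by have := hlt c hc hcp; linarith
    have key : det3 p a c * (u ⬝ᵥ p - u ⬝ᵥ b) =
        det3 p b c * (u ⬝ᵥ p - u ⬝ᵥ a) + det3 p a b * (u ⬝ᵥ p - u ⬝ᵥ c) := by
      simp [det3, Matrix.det_fin_three, Matrix.vecHead, Matrix.vecTail, dotProduct, Fin.sum_univ_two]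
      ring
    nlinarith [mul_pos hbc La, mul_pos hab Lc]
  · intro a ha hap b hb hbp hab
    have hne := hgp p hp a ha b hb (Ne.symm hap) hab (Ne.symm hbp)
    have hswap : det3 p b a = - det3 p a b := by
      simp [det3, Matrix.det_fin_three, Matrix.vecHead, Matrix.vecTail]; ring
    rcases lt_or_gt_of_ne hne with h | h
    · right; rw [hswap]; linarith
    · left; exact h
end
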